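/- Let R be a right coherent ring that is left n-perfect. Then every Gorenstein projective left R-module is Gorenstein flat. -/

import Mathlib

open CategoryTheory

noncomputable section

/-- The character module `M⁺ = Hom_ℤ(M, ℚ/ℤ)`. -/
def CharMod (M : Type) [AddCommGroup M] : Type := M →+ AddCircle (1 : ℚ)

namespace CharMod

instance (M : Type) [AddCommGroup M] : AddCommGroup (CharMod M) :=
  inferInstanceAs (AddCommGroup (M →+ AddCircle (1 : ℚ)))

instance (M : Type) [AddCommGroup M] : FunLike (CharMod M) M (AddCircle (1 : ℚ)) :=
  inferInstanceAs (FunLike (M →+ AddCircle (1 : ℚ)) M _)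

instance (M : Type) [AddCommGroup M] :
    AddMonoidHomClass (CharMod M) M (AddCircle (1 : ℚ)) :=
  inferInstanceAs (AddMonoidHomClass (M →+ AddCircle (1 : ℚ)) M _)

@[ext] theorem ext {M : Type} [AddCommGroup M] {c c' : CharMod M}
    (h : ∀ x, c x = c' x) : c = c' := DFunLike.ext _ _ h

/-- If `M` is a left `R`-module, `M⁺` is a right `R`-module. -/
instance moduleRight (R M : Type) [Ring R] [AddCommGroup M] [Module R M] :
    Module Rᵐᵒᵖ (CharMod M) where
  smul r c := (c : M →+ AddCircle (1 : ℚ)).comp (DistribMulAction.toAddMonoidHom M r.unop)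
  one_smul c := by ext x; show c ((1 : R) • x) = c x; rw [one_smul]
  mul_smul r s c := by
    ext x
    show c (((r * s).unop) • x) = c (s.unop • r.unop • x)
    rw [MulOpposite.unop_mul, mul_smul]
  smul_zero r := by ext x; rfl
  smul_add r c d := by ext x; rfl
  add_smul r s c := by
    ext x
    show c (((r + s).unop) • x) = c (r.unop • x) + c (s.unop • x)
    rw [MulOpposite.unop_add, add_smul, map_add]
  zero_smul c := by
    ext x
    show c ((0 : R) • x) = 0
    rw [zero_smul, map_zero]

/-- If `M` is a right `R`-module, `M⁺` is a left `R`-module. -/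
instance moduleLeft (R M : Type) [Ring R] [AddCommGroup M] [Module Rᵐᵒᵖ M] :
    Module R (CharMod M) where
  smul r c := (c : M →+ AddCircle (1 : ℚ)).comp
    (DistribMulAction.toAddMonoidHom M (MulOpposite.op r))
  one_smul c := by ext x; show c ((MulOpposite.op (1 : R)) • x) = c x; simp
  mul_smul r s c := by
    ext x
    show c ((MulOpposite.op (r * s)) • x) = c (MulOpposite.op s • MulOpposite.op r • x)
    rw [MulOpposite.op_mul, mul_smul]
  smul_zero r := by ext x; rfl
  smul_add r c d := by ext x; rfl
  add_smul r s c := by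
    ext x
    show c ((MulOpposite.op (r + s)) • x) = c (MulOpposite.op r • x) + c (MulOpposite.op s • x)
    rw [MulOpposite.op_add, add_smul, map_add]
  zero_smul c := by
    ext x
    show c ((MulOpposite.op (0 : R)) • x) = 0
    rw [MulOpposite.op_zero, zero_smul, map_zero]

end CharMod

/-- The canonical evaluation map `M → M⁺⁺`. -/
def evalCharChar (R M : Type) [Ring R] [AddCommGroup M] [Module R M] :
    M →ₗ[R] CharMod (CharMod M) where
  toFun m := { toFun := fun c => c m, map_zero' := rfl, map_add' := fun _ _ => rfl }
  map_add' m m' := by ext c; exact map_add c m m'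
  map_smul' r m := by ext c; rfl

/-- A ring is right coherent if every finitely generated right ideal is finitely presented. -/
def RightCoherent (R : Type) [Ring R] : Prop :=
  ∀ I : Submodule Rᵐᵒᵖ R, I.FG → Module.FinitePresentation Rᵐᵒᵖ I

/-- Flatness over a possibly noncommutative ring, phrased via Lambek's criterion:
a left module is flat iff its character module is an injective right module. -/
def IsFlatMod (R M : Type) [Ring R] [AddCommGroup M] [Module R M] : Prop :=
  Module.Injective Rᵐᵒᵖ (CharMod M)

/-- An injective linear map is a pure injection if every map from a finitely presented
module to the cokernel lifts; this is the standard purity criterion. -/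
def IsPureInjection {R M N : Type} [Ring R] [AddCommGroup M] [AddCommGroup N]
    [Module R M] [Module R N] (f : M →ₗ[R] N) : Prop :=
  Function.Injective f ∧
  ∀ (P : Type) [AddCommGroup P] [Module R P], Module.FinitePresentation R P →
    ∀ g : P →ₗ[R] (N ⧸ LinearMap.range f),
      ∃ h : P →ₗ[R] N, (LinearMap.range f).mkQ ∘ₗ h = g

/-- A module is pure injective if it is injective relative to pure injections. -/
def IsPureInjectiveModule (R C : Type) [Ring R] [AddCommGroup C] [Module R C] : Prop :=
  ∀ (A B : Type) [AddCommGroup A] [AddCommGroup B] [Module R A] [Module R B]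
    (f : A →ₗ[R] B), IsPureInjection f →
    ∀ g : A →ₗ[R] C, ∃ h : B →ₗ[R] C, h ∘ₗ f = g

/-- An unbounded ℤ-indexed sequence of modules with maps going down. -/
structure Cx (S : Type) [Ring S] where
  X : ℤ → ModuleCat.{0} S
  d : ∀ n : ℤ, X (n + 1) ⟶ X n

namespace Cx

variable {S : Type} [Ring S]

/-- The complex is exact at every spot. -/
def Exact (C : Cx S) : Prop := ∀ n : ℤ, Function.Exact (C.d (n + 1)) (C.d n)

/-- `Hom(C, P)` is exact. -/
def HomExact (C : Cx S) (P : ModuleCat S) : Prop :=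
  ∀ (n : ℤ) (f : C.X (n + 1) ⟶ P), C.d (n + 1) ≫ f = 0 →
    ∃ g : C.X n ⟶ P, C.d n ≫ g = f

/-- `Hom(E, C)` is exact. -/
def CoHomExact (C : Cx S) (E : ModuleCat S) : Prop :=
  ∀ (n : ℤ) (f : E ⟶ C.X (n + 1)), f ≫ C.d n = 0 →
    ∃ g : E ⟶ C.X (n + 1 + 1), g ≫ C.d (n + 1) = f

end Cx

/-- `E ⊗_R C` is exact for every injective right `R`-module `E`, expressed via the
standard character-module duality: `E ⊗ C` is exact iff `Hom_R(C, E⁺)` is exact. -/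
def InjTensorExact (R : Type) [Ring R] (C : Cx R) : Prop :=
  ∀ (E : Type) [AddCommGroup E] [Module Rᵐᵒᵖ E], Module.Injective Rᵐᵒᵖ E →
    C.HomExact (ModuleCat.of R (CharMod E))

/-- A Gorenstein projective module: a cycle of a totally acyclic complex of projectives. -/
def IsGorensteinProjective (R M : Type) [Ring R] [AddCommGroup M] [Module R M] : Prop :=
  ∃ C : Cx R,
    (∀ n, Module.Projective R (C.X n)) ∧ C.Exact ∧
    (∀ P : ModuleCat R, Module.Projective R P → C.HomExact P) ∧
    Nonempty (M ≃ₗ[R] LinearMap.ker (C.d (-1)).hom)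

/-- A Gorenstein flat module: a cycle of an exact `Inj ⊗ -`-exact complex of flats. -/
def IsGorensteinFlat (R M : Type) [Ring R] [AddCommGroup M] [Module R M] : Prop :=
  ∃ C : Cx R,
    (∀ n, IsFlatMod R (C.X n)) ∧ C.Exact ∧ InjTensorExact R C ∧
    Nonempty (M ≃ₗ[R] LinearMap.ker (C.d (-1)).hom)

/-- A Gorenstein injective module: a cycle of an exact `Hom(Inj, -)`-exact complex of
injectives. -/
def IsGorensteinInjective (S N : Type) [Ring S] [AddCommGroup N] [Module S N] : Prop :=
  ∃ C : Cx S,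
    (∀ n, Module.Injective S (C.X n)) ∧ C.Exact ∧
    (∀ E : ModuleCat S, Module.Injective S E → C.CoHomExact E) ∧
    Nonempty (N ≃ₗ[S] LinearMap.ker (C.d (-1)).hom)

/-- Projective dimension at most `n`, via syzygies. -/
def projDimLE (R : Type) [Ring R] : ℕ → ModuleCat R → Prop
  | 0, M => Module.Projective R M
  | n + 1, M => ∃ (K P : ModuleCat R) (i : K ⟶ P) (p : P ⟶ M),
      Module.Projective R P ∧ Function.Injective i ∧ Function.Surjective p ∧
      Function.Exact i p ∧ projDimLE R n K

/-- Injective dimension at most `n`, via cosyzygies. -/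
def injDimLE (R : Type) [Ring R] : ℕ → ModuleCat R → Prop
  | 0, M => Module.Injective R M
  | n + 1, M => ∃ (E C' : ModuleCat R) (i : M ⟶ E) (p : E ⟶ C'),
      Module.Injective R E ∧ Function.Injective i ∧ Function.Surjective p ∧
      Function.Exact i p ∧ injDimLE R n C'

/-- Gorenstein projective dimension at most `n`. -/
def gpdLE (R : Type) [Ring R] : ℕ → ModuleCat R → Prop
  | 0, M => IsGorensteinProjective R M
  | n + 1, M => ∃ (K P : ModuleCat R) (i : K ⟶ P) (p : P ⟶ M),
      IsGorensteinProjective R P ∧ Function.Injective i ∧ Function.Surjective p ∧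
      Function.Exact i p ∧ gpdLE R n K

/-- `R` is left `n`-perfect: every flat left module has projective dimension at most `n`. -/
def LeftNPerfect (R : Type) [Ring R] (n : ℕ) : Prop :=
  ∀ M : ModuleCat R, IsFlatMod R M → projDimLE R n M

/-- `Ext^n(M, N) = 0`. -/
abbrev extVanish (R : Type) [Ring R] (n : ℕ) (M N : ModuleCat R) : Prop :=
  Subsingleton ((((Ext ℤ (ModuleCat R) n).obj (Opposite.op M)).obj N : Type))

/-- A cotorsion module: `Ext^1(K, F) = 0` for every flat `K`. -/
def IsCotorsion (R F : Type) [Ring R] [AddCommGroup F] [Module R F] : Prop :=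
  ∀ (K : ModuleCat R), IsFlatMod R K → extVanish R 1 K (ModuleCat.of R F)

/-- Vanishing of `Ext^1` in an abelian category, via splitting of extensions. -/
def Ext1IsZero {C : Type*} [Category C] [Abelian C] (X Y : C) : Prop :=
  ∀ (E : C) (i : Y ⟶ E) (p : E ⟶ X) (w : i ≫ p = 0),
    (ShortComplex.mk i p w).ShortExact → ∃ s : X ⟶ E, s ≫ p = 𝟙 X


/-!
Projective modules satisfy the equational criterion for flatness, and over a right coherent ring
so do the character modules `E⁺` of injective right modules (Cheatham–Stone); the criterion makes
the character module injective, which is flatness in Lambek's form. So the totally acyclic complex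
`C` of projectives exhibiting `M` consists of flat modules, and `Inj ⊗ -`-exactness asks for
exactness of `Hom(C, E⁺)`. As `R` is left `n`-perfect, the flat module `E⁺` has projective
dimension at most `n`, and `Hom(C, -)`, exact on projectives, stays exact on modules of finite
projective dimension by dimension shifting.
-/

open MulOpposite

namespace CharMod

lemma op_smul_apply {R M : Type} [Ring R] [AddCommGroup M] [Module R M] (r : Rᵐᵒᵖ)
    (c : CharMod M) (m : M) : (r • c) m = c (r.unop • m) := rfl

lemma smul_apply {R E : Type} [Ring R] [AddCommGroup E] [Module Rᵐᵒᵖ E] (r : R)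
    (c : CharMod E) (e : E) : (r • c) e = c (op r • e) := rfl

@[simp] lemma zero_apply {M : Type} [AddCommGroup M] (m : M) : (0 : CharMod M) m = 0 := rfl

lemma sum_apply {M ι : Type} [AddCommGroup M] (s : Finset ι) (c : ι → CharMod M) (m : M) :
    (∑ i ∈ s, c i) m = ∑ i ∈ s, c i m :=
  AddMonoidHom.finsetSum_apply (fun i => (c i : M →+ AddCircle (1 : ℚ))) s m

end CharMod

lemma AddMonoidHom.exists_comp_eq_of_divisible {G H D : Type} [AddCommGroup G]
    [AddCommGroup H] [AddCommGroup D] [DivisibleBy D ℤ] (A : G →+ H) (μ : G →+ D)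
    (hker : ∀ g, A g = 0 → μ g = 0) : ∃ W : H →+ D, W.comp A = μ := by
  let μ' : G ⧸ A.ker →+ D := QuotientAddGroup.lift A.ker μ hker
  obtain ⟨W, hW⟩ := (Module.Baer.of_divisible D).extension_property_addMonoidHom
    (QuotientAddGroup.kerLift A) (QuotientAddGroup.kerLift_injective A) μ'
  exact ⟨W, by ext g; exact DFunLike.congr_fun hW (g : G ⧸ A.ker)⟩

/-- The equational criterion for flatness: every relation in `M` comes from relations in `R`. -/
def IsEquationallyFlat (R M : Type) [Ring R] [AddCommGroup M] [Module R M] : Prop :=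
  ∀ (ι : Type) [Fintype ι] (x : ι → R) (m : ι → M), ∑ i, x i • m i = 0 →
    ∃ (κ : Type) (_ : Fintype κ) (v : κ → ι → R) (w : κ → M),
      (∀ t, ∑ i, x i * v t i = 0) ∧ ∀ i, m i = ∑ t, v t i • w t

namespace IsEquationallyFlat

variable {R M : Type} [Ring R] [AddCommGroup M] [Module R M]

lemma of_retract {F : Type} [AddCommGroup F] [Module R F] (s : M →ₗ[R] F) (ρ : F →ₗ[R] M)
    (hρs : ρ ∘ₗ s = LinearMap.id) (hF : IsEquationallyFlat R F) : IsEquationallyFlat R M := by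
  intro ι _ x m hrel
  have hrel' : ∑ i, x i • s (m i) = 0 := by simp only [← map_smul, ← map_sum, hrel, map_zero]
  obtain ⟨κ, _, v, w, hv, hw⟩ := hF ι x (s ∘ m) hrel'
  refine ⟨κ, inferInstance, v, ρ ∘ w, hv, fun i => ?_⟩
  simpa [← LinearMap.comp_apply ρ s, hρs] using congr(ρ $(hw i))

lemma finsupp (α : Type) : IsEquationallyFlat R (α →₀ R) := by
  classical
  intro ι _ x f hrel
  let B := Finset.univ.biUnion fun i => (f i).support
  refine ⟨B, inferInstance, fun b i => f i b.1, fun b => Finsupp.single b.1 1, fun b => ?_,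
    fun i => ?_⟩
  · simpa using DFunLike.congr_fun hrel b.1
  · have hsupp : (f i).support ⊆ B :=
      Finset.subset_biUnion_of_mem (fun i => (f i).support) (Finset.mem_univ i)
    simp only [Finsupp.smul_single_one]
    rw [Finset.sum_coe_sort B fun b => Finsupp.single b (f i b),
      ← Finsupp.sum_of_support_subset _ hsupp _ (fun _ _ => Finsupp.single_zero _),
      Finsupp.sum_single]

lemma of_projective [Module.Projective R M] : IsEquationallyFlat R M := by
  obtain ⟨s, hs⟩ := Module.projective_def'.mp ‹_›
  exact of_retract s _ hs (finsupp M)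

lemma sum_apply_eq_zero (hM : IsEquationallyFlat R M) (I : Ideal Rᵐᵒᵖ)
    (g : I →ₗ[Rᵐᵒᵖ] CharMod M) {ι : Type} [Fintype ι] (ξ : ι → I) (m : ι → M)
    (hrel : ∑ i, (ξ i : Rᵐᵒᵖ).unop • m i = 0) : ∑ i, g (ξ i) (m i) = 0 := by
  obtain ⟨κ, _, v, w, hv, hw⟩ := hM ι (fun i => (ξ i : Rᵐᵒᵖ).unop) m hrel
  -- `g` kills the relation because it kills the relations in `R` it comes from, by linearity.
  have hξv : ∀ t, ∑ i, op (v t i) • ξ i = 0 := fun t => by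
    apply Subtype.ext
    apply unop_injective
    simpa using hv t
  calc ∑ i, g (ξ i) (m i) = ∑ t, g (∑ i, op (v t i) • ξ i) (w t) := by
        simp only [hw, map_sum, map_smul, CharMod.sum_apply, CharMod.op_smul_apply, unop_op]
        exact Finset.sum_comm
    _ = 0 := by simp [hξv]

lemma isFlatMod (hM : IsEquationallyFlat R M) : IsFlatMod R M := by
  classical
  refine Module.Baer.injective fun I g => ?_
  let A : (I →₀ M) →+ M :=
    Finsupp.liftAddHom fun ξ => DistribSMul.toAddMonoidHom M (ξ : Rᵐᵒᵖ).unop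
  let q : (I →₀ M) →+ AddCircle (1 : ℚ) :=
    Finsupp.liftAddHom fun ξ => (g ξ : M →+ AddCircle (1 : ℚ))
  obtain ⟨c, hc⟩ := A.exists_comp_eq_of_divisible q fun f hf => by
    have hA : A f = ∑ ξ : f.support, (ξ.1 : Rᵐᵒᵖ).unop • f ξ.1 :=
      (Finset.sum_coe_sort f.support fun ξ => (ξ : Rᵐᵒᵖ).unop • f ξ).symm
    have hq : q f = ∑ ξ : f.support, g ξ.1 (f ξ.1) :=
      (Finset.sum_coe_sort f.support fun ξ => g ξ (f ξ)).symm
    rw [hq]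
    exact hM.sum_apply_eq_zero I g (fun ξ : f.support => ξ.1) (fun ξ => f ξ.1) (hA ▸ hf)
  refine ⟨LinearMap.toSpanSingleton Rᵐᵒᵖ (CharMod M) c, fun x hx => ?_⟩
  ext m
  have hA : A (Finsupp.single ⟨x, hx⟩ m) = x.unop • m := Finsupp.liftAddHom_apply_single _ _ _
  change c (x.unop • m) = g ⟨x, hx⟩ m
  rw [← hA]
  exact (DFunLike.congr_fun hc _).trans
    (Finsupp.liftAddHom_apply_single (fun ξ => (g ξ : M →+ AddCircle (1 : ℚ))) _ _)

end IsEquationallyFlat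

section CharModOfInjective

variable {R : Type} [Ring R] {ι : Type} [Fintype ι]

lemma RightCoherent.fg_ker_linearCombination (hcoh : RightCoherent R) (x : ι → R) :
    (LinearMap.ker (Fintype.linearCombination Rᵐᵒᵖ x)).FG := by
  set π := Fintype.linearCombination Rᵐᵒᵖ x
  have : Module.FinitePresentation Rᵐᵒᵖ (LinearMap.range π) :=
    hcoh _ (by rw [Fintype.range_linearCombination]; exact Submodule.fg_span (Set.finite_range x))
  simpa only [LinearMap.ker_rangeRestrict] using
    Module.FinitePresentation.fg_ker π.rangeRestrict π.surjective_rangeRestrict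

/-- `xᵢ ↦ eᵢ` is well defined on the right ideal `∑ xᵢ R` and extends to `R`. -/
lemma Module.Injective.exists_eq_op_smul_of_ker_le {E : Type} [AddCommGroup E] [Module Rᵐᵒᵖ E]
    [Module.Injective Rᵐᵒᵖ E] (x : ι → R) (e : ι → E)
    (hker : LinearMap.ker (Fintype.linearCombination Rᵐᵒᵖ x) ≤
      LinearMap.ker (Fintype.linearCombination Rᵐᵒᵖ e)) :
    ∃ y : E, ∀ i, e i = op (x i) • y := by
  classical
  set π := Fintype.linearCombination Rᵐᵒᵖ x
  let f : LinearMap.range π →ₗ[Rᵐᵒᵖ] E :=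
    (LinearMap.ker π).liftQ _ hker ∘ₗ π.quotKerEquivRange.symm.toLinearMap
  obtain ⟨F, hF⟩ := Module.Injective.extension_property Rᵐᵒᵖ E _ _
    (LinearMap.range π).subtype (Submodule.injective_subtype _) f
  refine ⟨F 1, fun i => ?_⟩
  have hπ : π (Pi.single i 1) = x i := by simp [π]
  calc e i = f ⟨π (Pi.single i 1), LinearMap.mem_range_self π _⟩ := by
        simp [f, LinearMap.quotKerEquivRange_symm_apply_image]
    _ = F (x i) := by rw [← hF]; simp [hπ]
    _ = op (x i) • F 1 := by rw [← map_smul, MulOpposite.smul_eq_mul_unop, unop_op, one_mul]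

/-- Cheatham–Stone. A relation `∑ xᵢ mᵢ = 0` in `E⁺` is dual to the map `eᵢ ↦ ∑ mᵢ eᵢ` on `Eⁱ`,
which by injectivity of `E` kills every family satisfying the finitely many generating
relations `v` of `x`; so it factors through `e ↦ (∑ᵢ eᵢ vₜᵢ)ₜ`, which provides the `w`. -/
lemma isEquationallyFlat_charMod_of_injective (hcoh : RightCoherent R)
    (E : Type) [AddCommGroup E] [Module Rᵐᵒᵖ E] [Module.Injective Rᵐᵒᵖ E] :
    IsEquationallyFlat R (CharMod E) := by
  classical
  intro ι _ x m hrel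
  obtain ⟨V, hV⟩ := hcoh.fg_ker_linearCombination x
  let A : (ι → E) →+ (V → E) := AddMonoidHom.mk'
    (fun e v => Fintype.linearCombination Rᵐᵒᵖ e v.1)
    (fun e e' => by ext v; simp [Fintype.linearCombination_apply, Finset.sum_add_distrib])
  let μ : (ι → E) →+ AddCircle (1 : ℚ) := AddMonoidHom.mk' (fun e => ∑ i, m i (e i))
    (fun e e' => by simp [Finset.sum_add_distrib])
  obtain ⟨W, hW⟩ := A.exists_comp_eq_of_divisible μ fun e he => by
    obtain ⟨y, hy⟩ := Module.Injective.exists_eq_op_smul_of_ker_le x e <| by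
      rw [← hV, Submodule.span_le]
      exact fun v hv => congr_fun he ⟨v, hv⟩
    change ∑ i, m i (e i) = 0
    simp only [hy, ← CharMod.smul_apply, ← CharMod.sum_apply, hrel, CharMod.zero_apply]
  refine ⟨V, inferInstance, fun v i => (v.1 i).unop,
    fun v => W.comp (AddMonoidHom.single (fun _ : V => E) v), fun v => ?_, fun i => ?_⟩
  · have hv : Fintype.linearCombination Rᵐᵒᵖ x v.1 = 0 := by
      rw [← LinearMap.mem_ker, ← hV]; exact Submodule.subset_span v.2
    simpa [Fintype.linearCombination_apply, MulOpposite.smul_eq_mul_unop] using hv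
  · ext e
    have hA : A (Pi.single i e) = fun v => v.1 i • e := by
      ext v; simp [A, Fintype.linearCombination_apply, Pi.single_apply]
    have hμ : μ (Pi.single i e) = m i e := by
      change ∑ j, m j ((Pi.single i e : ι → E) j) = m i e
      rw [Finset.sum_eq_single i (fun j _ hj => by simp [hj]) (by simp), Pi.single_eq_same]
    rw [← hμ, ← hW, AddMonoidHom.comp_apply, hA,
      ← Finset.univ_sum_single (fun v : V => v.1 i • e), map_sum, CharMod.sum_apply]
    exact Finset.sum_congr rfl fun v _ => rfl

end CharModOfInjective

namespace Cx

variable {S : Type} [Ring S] {C : Cx S}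

lemma Exact.d_comp_d (hC : C.Exact) (n : ℤ) : C.d (n + 1) ≫ C.d n = 0 := by
  ext z
  exact (hC n).apply_apply_eq_zero z

lemma HomExact.of_shortExact (hX : ∀ n, Module.Projective S (C.X n)) (hC : C.Exact)
    {K P Q : ModuleCat S} (i : K ⟶ P) (p : P ⟶ Q) (hi : Function.Injective i)
    (hp : Function.Surjective p) (hip : Function.Exact i p) (hK : C.HomExact K)
    (hP : C.HomExact P) : C.HomExact Q := by
  intro n f hf
  have hip₀ : i ≫ p = 0 := by ext z; exact hip.apply_apply_eq_zero z
  have : Mono i := (ModuleCat.mono_iff_injective i).2 hi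
  have hS := ModuleCat.shortComplex_exact (ShortComplex.mk i p hip₀) hip
  obtain ⟨f', hf'⟩ := Module.projective_lifting_property p.hom f.hom hp
  have hf₁ : ModuleCat.ofHom f' ≫ p = f := by ext z; exact congr($hf' z)
  let h := hS.lift (C.d (n + 1) ≫ ModuleCat.ofHom f') (by simp [hf₁, hf])
  have hhi : h ≫ i = C.d (n + 1) ≫ ModuleCat.ofHom f' := hS.lift_f _ _
  have hh : C.d (n + 1 + 1) ≫ h = 0 := by
    rw [← cancel_mono i, Category.assoc, hhi, ← Category.assoc, hC.d_comp_d, Limits.zero_comp,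
      Limits.zero_comp]
  obtain ⟨k, hk⟩ := hK (n + 1) h hh
  obtain ⟨g, hg⟩ := hP n (ModuleCat.ofHom f' - k ≫ i) (by simp [reassoc_of% hk, hhi])
  exact ⟨g ≫ p, by simp [reassoc_of% hg, hf₁, hip₀]⟩

lemma homExact_of_projDimLE (hX : ∀ n, Module.Projective S (C.X n)) (hC : C.Exact)
    (hproj : ∀ P : ModuleCat S, Module.Projective S P → C.HomExact P) :
    ∀ (m : ℕ) (Q : ModuleCat S), projDimLE S m Q → C.HomExact Q
  | 0, Q, hQ => hproj Q hQ
  | m + 1, _, ⟨K, P, i, p, hP, hi, hp, hip, hK⟩ =>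
    .of_shortExact hX hC i p hi hp hip (homExact_of_projDimLE hX hC hproj m K hK) (hproj P hP)

end Cx

/-- over a right coherent left `n`-perfect ring, every Gorenstein projective
module is Gorenstein flat. -/
theorem gorensteinProjective_gorensteinFlat (R : Type) [Ring R] (n : ℕ)
    (hcoh : RightCoherent R) (hperf : LeftNPerfect R n)
    (M : Type) [AddCommGroup M] [Module R M] (hM : IsGorensteinProjective R M) :
    IsGorensteinFlat R M := by
  obtain ⟨C, hproj, hC, hhom, hM⟩ := hM
  refine ⟨C, fun k => have := hproj k; (IsEquationallyFlat.of_projective (M := C.X k)).isFlatMod,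
    hC, ?_, hM⟩
  intro E _ _ _
  have hflat : IsFlatMod R (CharMod E) :=
    (isEquationallyFlat_charMod_of_injective hcoh E).isFlatMod
  exact C.homExact_of_projDimLE hproj hC hhom n _ (hperf _ hflat)

end
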